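/- Let m be a monad on c ⥤ Type whose underlying endofunctor is familial with positions m(1) and arities m[M], and suppose the multiplication μ of m is cartesian (every naturality square of μ is a pullback). For M ∈ m(1)(C) and a morphism of c-copresheaves N : m[M] ⟶ m(1), let μ(M, N) ∈ m(1)(C) denote the image of the corresponding element of m(m(1))(C) ≅ Σ_{M ∈ m(1)(C)} Hom(m[M], m(1)) under the multiplication component at the terminal copresheaf m(m(⊤)) → m(⊤). Then the arity m[μ(M, N)] is isomorphic, as a c-copresheaf, to the colimit colim_{z ∈ el(m[M])} m[N(z)], indexed by the category of elements of m[M]. -/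

import Mathlib

namespace Fam
open CategoryTheory Opposite Limits
private lemma sigmaExt {α : Type} {β : α → Type} {a a' : α} {b : β a} {b' : β a'}
    (h : a = a') (h' : HEq b b') : (⟨a, b⟩ : Σ x, β x) = ⟨a', b'⟩ := by
  subst h; cases h'; rfl
variable {c d : Type} [SmallCategory c] [SmallCategory d]
def elHom (pos : c ⥤ Type) {C C' : c} (f : C ⟶ C') (I : pos.obj C) :
    pos.elementsMk C I ⟶ pos.elementsMk C' (pos.map f I) :=
  CategoryOfElements.homMk _ _ f rfl
lemma eqToHom_val {pos : c ⥤ Type} {x y : pos.Elements} (E : x = y) :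
    (eqToHom E).val = eqToHom (congrArg Sigma.fst E) := by
  subst E; simp
@[simps]
def famApply (pos : c ⥤ Type) (ar : pos.Elementsᵒᵖ ⥤ d ⥤ Type) :
    (d ⥤ Type) ⥤ c ⥤ Type where
  obj X :=
    { obj := fun C => Σ I : pos.obj C, ar.obj (op (pos.elementsMk C I)) ⟶ X
      map := fun {C C'} f => TypeCat.ofHom fun x => ⟨pos.map f x.1, ar.map (elHom pos f x.1).op ≫ x.2⟩
      map_id := by
        intro C
        refine ConcreteCategory.hom_ext _ _ (fun x => ?_)
        obtain ⟨I, g⟩ := x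
        have h : pos.map (𝟙 C) I = I := by simp
        have hE : pos.elementsMk C I = pos.elementsMk C (pos.map (𝟙 C) I) := by rw [h]
        have he : elHom pos (𝟙 C) I = eqToHom hE := by
          apply CategoryOfElements.ext
          rw [eqToHom_val]
          simp [elHom]
        dsimp
        refine sigmaExt h ?_
        rw [he]
        simp [eqToHom_op, eqToHom_map]
      map_comp := by
        intro C C' C'' f g
        refine ConcreteCategory.hom_ext _ _ (fun x => ?_)
        obtain ⟨I, u⟩ := x
        have h : pos.map (f ≫ g) I = pos.map g (pos.map f I) := by simp
        have hE : pos.elementsMk C'' (pos.map (f ≫ g) I)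
            = pos.elementsMk C'' (pos.map g (pos.map f I)) := by rw [h]
        have hcomp : elHom pos f I ≫ elHom pos g (pos.map f I)
            = elHom pos (f ≫ g) I ≫ eqToHom hE := by
          apply CategoryOfElements.ext
          rw [CategoryOfElements.comp_val, CategoryOfElements.comp_val, eqToHom_val]
          simp [elHom]
        dsimp
        refine sigmaExt h ?_
        rw [← Category.assoc, ← ar.map_comp, ← op_comp, hcomp, op_comp, ar.map_comp,
          Category.assoc]
        simp [eqToHom_op, eqToHom_map] }
  map {X Y} t :=
    { app := fun C => TypeCat.ofHom fun x => ⟨x.1, x.2 ≫ t⟩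
      naturality := by
        intro C C' f
        refine ConcreteCategory.hom_ext _ _ (fun x => ?_)
        dsimp
        rw [Category.assoc] }
  map_id := by
    intro X
    apply NatTrans.ext
    funext C
    refine ConcreteCategory.hom_ext _ _ (fun x => ?_)
    dsimp
    rw [Category.comp_id]
  map_comp := by
    intro X Y Z s t
    apply NatTrans.ext
    funext C
    refine ConcreteCategory.hom_ext _ _ (fun x => ?_)
    dsimp
    rw [Category.assoc]

/-- The unit exhibiting `famApply pos (ar ⋙ G)` as the right coclosure `⌈F/G⌉`,
i.e. the left Kan extension of the familial functor `F = famApply pos ar` along `G`. -/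
def coclosureUnit {e : Type} [SmallCategory e] (pos : c ⥤ Type)
    (ar : pos.Elementsᵒᵖ ⥤ e ⥤ Type) (G : (e ⥤ Type) ⥤ d ⥤ Type) :
    famApply pos ar ⟶ G ⋙ famApply pos (ar ⋙ G) where
  app X :=
    { app := fun C => TypeCat.ofHom fun x => ⟨x.1, G.map x.2⟩
      naturality := by
        intro C C' f
        refine ConcreteCategory.hom_ext _ _ (fun x => ?_)
        show (⟨pos.map f x.1, G.map (ar.map (elHom pos f x.1).op ≫ x.2)⟩ :
            Σ I : pos.obj C', (ar ⋙ G).obj (op (pos.elementsMk C' I)) ⟶ G.obj X)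
          = ⟨pos.map f x.1, G.map (ar.map (elHom pos f x.1).op) ≫ G.map x.2⟩
        rw [G.map_comp] }
  naturality := by
    intro X Y t
    apply NatTrans.ext
    funext C
    refine ConcreteCategory.hom_ext _ _ (fun x => ?_)
    show (⟨x.1, G.map (x.2 ≫ t)⟩ :
        Σ I : pos.obj C, (ar ⋙ G).obj (op (pos.elementsMk C I)) ⟶ G.obj Y)
      = ⟨x.1, G.map x.2 ≫ G.map t⟩
    rw [G.map_comp]

section Statement13

variable {c : Type} [SmallCategory c]
  (m : Monad (c ⥤ Type)) {posm : c ⥤ Type} (arm : posm.Elementsᵒᵖ ⥤ c ⥤ Type)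

/-- The terminal copresheaf on `c`. -/
def termPSh : c ⥤ Type := (Functor.const c).obj PUnit

/-- The unique map to the terminal copresheaf. -/
def toTerm (Y : c ⥤ Type) : Y ⟶ termPSh where
  app := fun _ => TypeCat.ofHom fun _ => PUnit.unit

instance (Y : c ⥤ Type) : Subsingleton (Y ⟶ termPSh) :=
  ⟨fun a b => by
    apply NatTrans.ext
    ext C y
    rfl⟩

variable (em : famApply posm arm ≅ (m : (c ⥤ Type) ⥤ c ⥤ Type))

/-- The canonical identification of positions with elements of `m(⊤)`:
`I ↦ (I, ! : m[I] ⟶ ⊤)`. -/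
def posToM : posm ⟶ (m : (c ⥤ Type) ⥤ c ⥤ Type).obj termPSh where
  app C := TypeCat.ofHom fun I => (em.hom.app termPSh).app C ⟨I, toTerm _⟩
  naturality := by
    intro C C' f
    ext I
    have hnat := NatTrans.naturality_apply (em.hom.app termPSh) f
      (⟨I, toTerm _⟩ : Σ J : posm.obj C, arm.obj (op (posm.elementsMk C J)) ⟶ termPSh)
    show (em.hom.app termPSh).app C' ⟨posm.map f I, toTerm _⟩
      = ((m : (c ⥤ Type) ⥤ c ⥤ Type).obj termPSh).map f
          ((em.hom.app termPSh).app C ⟨I, toTerm _⟩)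
    rw [← hnat]
    exact congrArg (fun t => (em.hom.app termPSh).app C'
      (Sigma.mk (posm.map f I) t)) (Subsingleton.elim _ _)

/-- The composite operation `μ(M, N) ∈ m(1)(C)` of an operation `M ∈ m(1)(C)` with a family
of operations `N : m[M] ⟶ m(1)`: the image of the corresponding element of `m(m(⊤))(C)`
under the multiplication of `m` at the terminal copresheaf. -/
def compOp (C : c) (M : posm.obj C)
    (N : arm.obj (op (posm.elementsMk C M)) ⟶ posm) : posm.obj C :=
  ((em.inv.app termPSh).app C ((m.μ.app termPSh).app C
    ((em.hom.app ((m : (c ⥤ Type) ⥤ c ⥤ Type).obj termPSh)).app C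
      ⟨M, N ≫ posToM m arm em⟩))).1

/-! The arity `m[I]` corepresents the fibre of `m(!) : m(X)(D) → m(⊤)(D)` over `I`, naturally
in `X`. Since `μ` is cartesian, the fibre of `m(!)` over `μ(M, N)` is the fibre of `mm(!)` over
`(M, N)`, that is, the set of lifts `g : m[M] ⟶ m(X)` of `N` along `m(!)`. Applying the first
fact at every element of `m[M]` turns such a lift into a cocone under `z ↦ m[N z]` with vertex
`X`. So `m[μ(M, N)]` and the colimit corepresent the same functor. -/

section Fiber

variable {e : Type} [SmallCategory e]

lemma map_comp_map_toTerm {E : Type*} [Category E] (G : (c ⥤ Type) ⥤ E) {X Y : c ⥤ Type}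
    (h : X ⟶ Y) : G.map h ≫ G.map (toTerm Y) = G.map (toTerm X) := by
  rw [← G.map_comp, Subsingleton.elim (h ≫ toTerm Y) (toTerm X)]

def fiber (G : (c ⥤ Type) ⥤ e ⥤ Type) (D : e) (p : (G.obj termPSh).obj D) :
    (c ⥤ Type) ⥤ Type where
  obj X := {y : (G.obj X).obj D // (G.map (toTerm X)).app D y = p}
  map h := TypeCat.ofHom fun y =>
    ⟨(G.map h).app D y.1,
      (types_congr_hom (NatTrans.congr_app (map_comp_map_toTerm G h) D) y.1).trans y.2⟩

def fiberMap {G G' : (c ⥤ Type) ⥤ e ⥤ Type} (α : G ⟶ G') (D : e)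
    (p : (G.obj termPSh).obj D) :
    fiber G D p ⟶ fiber G' D ((α.app termPSh).app D p) where
  app X := TypeCat.ofHom fun y =>
    ⟨(α.app X).app D y.1,
      (types_congr_hom (NatTrans.naturality_app α D (toTerm X)) y.1).symm.trans (congrArg _ y.2)⟩
  naturality X Y h := by
    ext y
    exact Subtype.ext (types_congr_hom (NatTrans.naturality_app α D h) y.1)

lemma isIso_fiberMap_of_isPullback {G G' : (c ⥤ Type) ⥤ e ⥤ Type} (α : G ⟶ G')
    (hα : ∀ X : c ⥤ Type,
      IsPullback (G.map (toTerm X)) (α.app X) (α.app termPSh) (G'.map (toTerm X)))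
    (D : e) (p : (G.obj termPSh).obj D) : IsIso (fiberMap α D p) := by
  suffices ∀ X, IsIso ((fiberMap α D p).app X) from NatIso.isIso_of_isIso_app _
  intro X
  have hD := (hα X).map ((evaluation e Type).obj D)
  refine (isIso_iff_bijective _).mpr ⟨fun y y' hyy' => Subtype.ext ?_, ?_⟩
  · exact Types.ext_of_isPullback hD (y.2.trans y'.2.symm) (congrArg Subtype.val hyy')
  · rintro ⟨z, hz⟩
    obtain ⟨y, hy, rfl⟩ := Types.exists_of_isPullback hD p z hz.symm
    exact ⟨⟨y, hy⟩, rfl⟩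

noncomputable def fiberIsoOfIsPullback {G G' : (c ⥤ Type) ⥤ e ⥤ Type} (α : G ⟶ G')
    (hα : ∀ X : c ⥤ Type,
      IsPullback (G.map (toTerm X)) (α.app X) (α.app termPSh) (G'.map (toTerm X)))
    (D : e) (p : (G.obj termPSh).obj D) :
    fiber G D p ≅ fiber G' D ((α.app termPSh).app D p) :=
  haveI := isIso_fiberMap_of_isPullback α hα D p
  asIso (fiberMap α D p)

noncomputable def fiberIso {G G' : (c ⥤ Type) ⥤ e ⥤ Type} (α : G ≅ G') (D : e)
    (p : (G.obj termPSh).obj D) : fiber G D p ≅ fiber G' D ((α.hom.app termPSh).app D p) :=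
  fiberIsoOfIsPullback α.hom (fun _ => IsPullback.of_vert_isIso ⟨α.hom.naturality _⟩) D p

end Fiber

section Lifts

variable {e e' : Type} [SmallCategory e] [SmallCategory e']

def liftsOver (G : (c ⥤ Type) ⥤ e ⥤ Type) (A : e ⥤ Type) (v : A ⟶ G.obj termPSh) :
    (c ⥤ Type) ⥤ Type where
  obj X := {g : A ⟶ G.obj X // g ≫ G.map (toTerm X) = v}
  map h := TypeCat.ofHom fun g =>
    ⟨g.1 ≫ G.map h, by rw [Category.assoc, map_comp_map_toTerm, g.2]⟩

noncomputable def liftsOverIsoFiber (G : (c ⥤ Type) ⥤ e ⥤ Type) (pos : e' ⥤ Type)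
    (ar : pos.Elementsᵒᵖ ⥤ e ⥤ Type) (D : e') (I : pos.obj D)
    (v : ar.obj (op (pos.elementsMk D I)) ⟶ G.obj termPSh) :
    liftsOver G (ar.obj (op (pos.elementsMk D I))) v ≅
      fiber (G ⋙ famApply pos ar) D ⟨I, v⟩ :=
  NatIso.ofComponents (fun X => Equiv.toIso <|
    Equiv.ofBijective (fun g => ⟨⟨I, g.1⟩, congrArg (Sigma.mk I) g.2⟩) <| by
      refine ⟨fun g g' hgg' => Subtype.ext ?_, ?_⟩
      · exact eq_of_heq (Sigma.mk.inj_iff.mp (congrArg Subtype.val hgg')).2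
      · rintro ⟨⟨J, g⟩, hy⟩
        obtain ⟨rfl, hg⟩ := Sigma.mk.inj_iff.mp hy
        exact ⟨⟨g, eq_of_heq hg⟩, rfl⟩)
    fun _ => rfl

def coyonedaIsoLiftsOverId (A : c ⥤ Type) :
    coyoneda.obj (op A) ≅ liftsOver (𝟭 _) A (toTerm A) :=
  NatIso.ofComponents fun _ =>
    (Equiv.subtypeUnivEquiv fun _ => Subsingleton.elim (α := A ⟶ termPSh) _ _).symm.toIso

end Lifts

lemma famApply_map_mk {e : Type} [SmallCategory e] (pos : c ⥤ Type)
    (ar : pos.Elementsᵒᵖ ⥤ e ⥤ Type) (X : e ⥤ Type) {x y : pos.Elements} (φ : x ⟶ y)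
    (u : ar.obj (op x) ⟶ X) :
    ((famApply pos ar).obj X).map φ.1 ⟨x.2, u⟩ = ⟨y.2, ar.map φ.op ≫ u⟩ := by
  obtain ⟨D', J⟩ := y
  obtain ⟨f, hf⟩ := φ
  change x.1 ⟶ D' at f
  change pos.map f x.2 = J at hf
  subst hf
  rfl

noncomputable def arityIso (x : posm.Elements) :
    coyoneda.obj (op (arm.obj (op x))) ≅ fiber m x.1 ((posToM m arm em).app x.1 x.2) :=
  coyonedaIsoLiftsOverId _ ≪≫ liftsOverIsoFiber (𝟭 _) posm arm x.1 x.2 (toTerm _) ≪≫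
    fiberIso em x.1 ⟨x.2, toTerm _⟩

lemma map_arityIso_hom_app {x y : posm.Elements} (φ : x ⟶ y) {X : c ⥤ Type}
    (u : arm.obj (op x) ⟶ X) :
    ((m : (c ⥤ Type) ⥤ c ⥤ Type).obj X).map φ.1 ((arityIso m arm em x).hom.app X u).1
      = ((arityIso m arm em y).hom.app X (arm.map φ.op ≫ u)).1 :=
  (NatTrans.naturality_apply (em.hom.app X) φ.1 _).symm.trans
    (congrArg _ (famApply_map_mk posm arm X φ u))

lemma arityIso_hom_app_injective (x : posm.Elements) (X : c ⥤ Type) :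
    Function.Injective ((arityIso m arm em x).hom.app X) :=
  ((isIso_iff_bijective _).mp inferInstance).1

lemma arityIso_hom_inv_app_coe (x : posm.Elements) {X : c ⥤ Type}
    (y : (fiber m x.1 ((posToM m arm em).app x.1 x.2)).obj X) :
    ((arityIso m arm em x).hom.app X ((arityIso m arm em x).inv.app X y)).1 = y.1 :=
  congrArg Subtype.val (types_congr_hom (Iso.inv_hom_id_app (arityIso m arm em x) X) y)

section Cocones

variable {A : c ⥤ Type} (N : A ⟶ posm)

lemma map_arityIso_hom_app_cocone {X : c ⥤ Type} {x y : A.Elements} (φ : x ⟶ y)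
    (κ : (CategoryOfElements.map N).op ⋙ arm ⟶ (Functor.const _).obj X) :
    ((m : (c ⥤ Type) ⥤ c ⥤ Type).obj X).map φ.1
        ((arityIso m arm em ((CategoryOfElements.map N).obj x)).hom.app X (κ.app (op x))).1
      = ((arityIso m arm em ((CategoryOfElements.map N).obj y)).hom.app X (κ.app (op y))).1 :=
  (map_arityIso_hom_app m arm em ((CategoryOfElements.map N).map φ) (κ.app (op x))).trans
    (congrArg (fun u => ((arityIso m arm em _).hom.app X u).1)
      (by simpa using κ.naturality φ.op))

noncomputable def liftOfCocone {X : c ⥤ Type}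
    (κ : (CategoryOfElements.map N).op ⋙ arm ⟶ (Functor.const _).obj X) :
    (liftsOver m A (N ≫ posToM m arm em)).obj X where
  val :=
    { app := fun D => TypeCat.ofHom fun t =>
        ((arityIso m arm em ⟨D, N.app D t⟩).hom.app X (κ.app (op ⟨D, t⟩))).1
      naturality := fun D D' f => by
        ext t
        exact (map_arityIso_hom_app_cocone m arm em N (elHom A f t) κ).symm }
  property := by
    ext D t
    exact ((arityIso m arm em ⟨D, N.app D t⟩).hom.app X (κ.app (op ⟨D, t⟩))).2

noncomputable def coconeOfLift {X : c ⥤ Type}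
    (g : (liftsOver m A (N ≫ posToM m arm em)).obj X) :
    (CategoryOfElements.map N).op ⋙ arm ⟶ (Functor.const _).obj X where
  app z := (arityIso m arm em ((CategoryOfElements.map N).obj z.unop)).inv.app X
    ⟨g.1.app z.unop.1 z.unop.2, types_congr_hom (NatTrans.congr_app g.2 z.unop.1) z.unop.2⟩
  naturality a b ψ := by
    dsimp only [Functor.const_obj_obj, Functor.const_obj_map]
    rw [Category.comp_id]
    apply arityIso_hom_app_injective m arm em
    refine Subtype.ext ((map_arityIso_hom_app m arm em
      ((CategoryOfElements.map N).map ψ.unop) _).symm.trans ?_)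
    refine (congrArg _ (arityIso_hom_inv_app_coe m arm em _ _)).trans ?_
    refine ((NatTrans.naturality_apply g.1 ψ.unop.1 _).symm.trans (congrArg _ ψ.unop.2)).trans ?_
    exact (arityIso_hom_inv_app_coe m arm em ((CategoryOfElements.map N).obj a.unop)
      (X := X) ⟨_, _⟩).symm

noncomputable def coconesIsoLiftsOver :
    ((CategoryOfElements.map N).op ⋙ arm).cocones ≅ liftsOver m A (N ≫ posToM m arm em) :=
  NatIso.ofComponents (fun X => Equiv.toIso
    { toFun := liftOfCocone m arm em N
      invFun := coconeOfLift m arm em N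
      left_inv := fun κ => NatTrans.ext (funext fun _ => Iso.hom_inv_id_app_apply _ _ _)
      right_inv := fun g => Subtype.ext (NatTrans.ext (funext fun _ =>
        ConcreteCategory.hom_ext _ _ fun _ => arityIso_hom_inv_app_coe m arm em _ _)) })
    fun h => by
      refine ConcreteCategory.hom_ext _ _ fun κ => ?_
      apply Subtype.ext
      ext D t
      exact congrArg Subtype.val (NatTrans.naturality_apply (arityIso m arm em _).hom h _)

end Cocones

lemma posToM_app_fst_inv_app (D : c) (y : ((m : (c ⥤ Type) ⥤ c ⥤ Type).obj termPSh).obj D) :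
    (posToM m arm em).app D ((em.inv.app termPSh).app D y).1 = y := by
  have hsigma : (⟨((em.inv.app termPSh).app D y).1, toTerm _⟩ :
      Σ I : posm.obj D, arm.obj (op (posm.elementsMk D I)) ⟶ termPSh)
        = (em.inv.app termPSh).app D y :=
    congrArg (Sigma.mk _) (Subsingleton.elim _ _)
  exact (congrArg _ hsigma).trans
    (types_congr_hom (NatTrans.congr_app (em.inv_hom_id_app termPSh) D) y)

/-- If `m` is a familial monad on `c ⥤ Type` whose multiplication is
cartesian, then the arity of the composite operation `μ(M, N)` is isomorphic to the colimit
`colim_{z ∈ el(m[M])} m[N(z)]`, indexed by the category of elements of the arity `m[M]`. -/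
theorem comp_arity_colimit_of_cartesian_mult
    (hMultCartesian : ∀ {X Y : c ⥤ Type} (f : X ⟶ Y),
      IsPullback ((m : (c ⥤ Type) ⥤ c ⥤ Type).map ((m : (c ⥤ Type) ⥤ c ⥤ Type).map f))
        (m.μ.app X) (m.μ.app Y) ((m : (c ⥤ Type) ⥤ c ⥤ Type).map f))
    (C : c) (M : posm.obj C) (N : arm.obj (op (posm.elementsMk C M)) ⟶ posm) :
    Nonempty (arm.obj (op (posm.elementsMk C (compOp m arm em C M N))) ≅
      Limits.colimit ((CategoryOfElements.map N).op ⋙ arm)) := by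
  let w := (em.hom.app ((m : (c ⥤ Type) ⥤ c ⥤ Type).obj termPSh)).app C
    ⟨M, N ≫ posToM m arm em⟩
  let iso : coyoneda.obj (op (arm.obj (op (posm.elementsMk C (compOp m arm em C M N))))) ≅
      ((CategoryOfElements.map N).op ⋙ arm).cocones :=
    arityIso m arm em (posm.elementsMk C (compOp m arm em C M N)) ≪≫
    eqToIso (congrArg (fiber _ C) (posToM_app_fst_inv_app m arm em C _)) ≪≫
    (fiberIsoOfIsPullback m.μ (fun X => hMultCartesian (toTerm X)) C w).symm ≪≫
    (fiberIso (Functor.isoWhiskerLeft (m : (c ⥤ Type) ⥤ c ⥤ Type) em) C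
      ⟨M, N ≫ posToM m arm em⟩).symm ≪≫
    (liftsOverIsoFiber _ posm arm C M _).symm ≪≫
    (coconesIsoLiftsOver m arm em N).symm
  exact ⟨((Functor.CorepresentableBy.coyoneda _).ofIso iso).uniqueUpToIso
    (colimit.isColimit _).corepresentableBy⟩

end Statement13

end Fam
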